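/- Let D be a positive integer, let S₁ and S₂ be D×D Hermitian positive definite complex matrices, let P be an invertible D×D complex matrix and Λ a diagonal matrix with positive real diagonal entries such that P^H S₁ P = Λ and P^H S₂ P = I, and let v₁, v₂ > 0 be real numbers. Then P^H ( v₁ v₂ S₁ (v₁ S₁ + v₂ S₂)⁻¹ S₂ ) P = v₁ v₂ Λ (v₁ Λ + v₂ I)⁻¹. Consequently, for any vector μ ∈ ℂ^D, P^H ( μ μ^H + v₁ v₂ S₁ (v₁ S₁ + v₂ S₂)⁻¹ S₂ ) P = (P^H μ)(P^H μ)^H + v₁ v₂ Λ (v₁ Λ + v₂ I)⁻¹. -/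
import Mathlib


open Matrix
open scoped ComplexOrder

/-- Under joint diagonalization `Pᴴ S₁ P = Λ`, `Pᴴ S₂ P = I` (with `Λ` diagonal
with positive real entries) and for `v₁, v₂ > 0`,
`Pᴴ (v₁ v₂ S₁ (v₁ S₁ + v₂ S₂)⁻¹ S₂) P = v₁ v₂ Λ (v₁ Λ + v₂ I)⁻¹`, and hence for
every `μ`, `Pᴴ (μ μᴴ + v₁ v₂ S₁ (v₁ S₁ + v₂ S₂)⁻¹ S₂) P
= (Pᴴ μ)(Pᴴ μ)ᴴ + v₁ v₂ Λ (v₁ Λ + v₂ I)⁻¹`. -/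
theorem fastfca_stmt10 (D : ℕ) (hD : 0 < D)
    (S₁ S₂ P : Matrix (Fin D) (Fin D) ℂ)
    (h₁ : S₁.PosDef) (h₂ : S₂.PosDef) (hP : IsUnit P.det)
    (d : Fin D → ℝ) (hd : ∀ i, 0 < d i)
    (hdiag1 : Pᴴ * S₁ * P = Matrix.diagonal (fun i => (d i : ℂ)))
    (hdiag2 : Pᴴ * S₂ * P = 1)
    (v₁ v₂ : ℝ) (hv₁ : 0 < v₁) (hv₂ : 0 < v₂) :
    Pᴴ * (((v₁ * v₂ : ℝ) : ℂ) • (S₁ * ((v₁ : ℂ) • S₁ + (v₂ : ℂ) • S₂)⁻¹ * S₂)) * P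
      = ((v₁ * v₂ : ℝ) : ℂ) • (Matrix.diagonal (fun i => (d i : ℂ)) *
          ((v₁ : ℂ) • Matrix.diagonal (fun i => (d i : ℂ)) + (v₂ : ℂ) • 1)⁻¹) ∧
    ∀ μ : Fin D → ℂ,
      Pᴴ * (Matrix.vecMulVec μ (star μ) +
            ((v₁ * v₂ : ℝ) : ℂ) • (S₁ * ((v₁ : ℂ) • S₁ + (v₂ : ℂ) • S₂)⁻¹ * S₂)) * P
        = Matrix.vecMulVec (Pᴴ *ᵥ μ) (star (Pᴴ *ᵥ μ)) +
          ((v₁ * v₂ : ℝ) : ℂ) • (Matrix.diagonal (fun i => (d i : ℂ)) *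
            ((v₁ : ℂ) • Matrix.diagonal (fun i => (d i : ℂ)) + (v₂ : ℂ) • 1)⁻¹) := by
  set Λ : Matrix (Fin D) (Fin D) ℂ := Matrix.diagonal (fun i => (d i : ℂ)) with hΛ
  set M : Matrix (Fin D) (Fin D) ℂ := (v₁ : ℂ) • S₁ + (v₂ : ℂ) • S₂ with hMdef
  set Δ : Matrix (Fin D) (Fin D) ℂ := (v₁ : ℂ) • Λ + (v₂ : ℂ) • 1 with hΔdef
  have hPH : IsUnit Pᴴ.det := by
    rw [Matrix.det_conjTranspose]
    exact hP.star
  have hΔdiag : Δ = Matrix.diagonal (fun i => ((v₁ * d i + v₂ : ℝ) : ℂ)) := by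
    ext i j
    by_cases h : i = j <;>
      simp [hΔdef, hΛ, Matrix.diagonal_apply, Matrix.one_apply, h] <;> push_cast <;> ring
  have hΔunit : IsUnit Δ.det := by
    rw [hΔdiag, Matrix.det_diagonal]
    refine isUnit_iff_ne_zero.2 (Finset.prod_ne_zero_iff.2 fun i _ => ?_)
    exact_mod_cast ne_of_gt (add_pos (mul_pos hv₁ (hd i)) hv₂)
  have hM : Pᴴ * M * P = Δ := by
    rw [hMdef, hΔdef, ← hdiag1, ← hdiag2]
    rw [Matrix.mul_add, Matrix.add_mul, Matrix.mul_smul, Matrix.smul_mul,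
      Matrix.mul_smul, Matrix.smul_mul]
  have hMunit : IsUnit M.det := by
    have h := hΔunit
    rw [← hM, Matrix.det_mul, Matrix.det_mul, IsUnit.mul_iff, IsUnit.mul_iff] at h
    exact h.1.2
  have hMinv : M⁻¹ = P * Δ⁻¹ * Pᴴ := by
    apply Matrix.inv_eq_left_inv
    have h1 : P * Δ⁻¹ * Pᴴ * M * P = P := by
      have e : P * Δ⁻¹ * Pᴴ * M * P = P * Δ⁻¹ * (Pᴴ * M * P) := by
        simp only [Matrix.mul_assoc]
      rw [e, hM, Matrix.nonsing_inv_mul_cancel_right _ _ hΔunit]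
    calc P * Δ⁻¹ * Pᴴ * M
        = P * Δ⁻¹ * Pᴴ * M * P * P⁻¹ := (Matrix.mul_nonsing_inv_cancel_right _ _ hP).symm
      _ = P * P⁻¹ := by rw [h1]
      _ = 1 := Matrix.mul_nonsing_inv _ hP
  have core : Pᴴ * (S₁ * M⁻¹ * S₂) * P = Λ * Δ⁻¹ := by
    rw [hMinv]
    have : Pᴴ * (S₁ * (P * Δ⁻¹ * Pᴴ) * S₂) * P
        = (Pᴴ * S₁ * P) * Δ⁻¹ * (Pᴴ * S₂ * P) := by
      simp only [Matrix.mul_assoc]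
    rw [this, hdiag1, hdiag2, Matrix.mul_one]
  have main : Pᴴ * (((v₁ * v₂ : ℝ) : ℂ) • (S₁ * M⁻¹ * S₂)) * P
      = ((v₁ * v₂ : ℝ) : ℂ) • (Λ * Δ⁻¹) := by
    rw [Matrix.mul_smul, Matrix.smul_mul, core]
  refine ⟨main, fun μ => ?_⟩
  have rank1 : Pᴴ * Matrix.vecMulVec μ (star μ) * P
      = Matrix.vecMulVec (Pᴴ *ᵥ μ) (star (Pᴴ *ᵥ μ)) := by
    have hstar : star (Pᴴ *ᵥ μ) = star μ ᵥ* P := by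
      rw [Matrix.star_mulVec, Matrix.conjTranspose_conjTranspose]
    rw [hstar]
    ext i j
    simp only [Matrix.mul_apply, Matrix.vecMulVec_apply, Matrix.mulVec, Matrix.vecMul,
      dotProduct, Finset.sum_mul, Finset.mul_sum]
    exact Finset.sum_congr rfl fun k _ => Finset.sum_congr rfl fun l _ => by ring
  rw [Matrix.mul_add, Matrix.add_mul, rank1, main]
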